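/- arXiv:2512.01545 — 2 statements merged into one kernel-verified Lean document; each statement's English description precedes it below -/
import Mathlib

section
/- Let f : (-1,1) → ℝ be continuously differentiable with lim_{s→1⁻} f'(s) = +∞ and lim_{s→-1⁺} f'(s) = -∞. Then for every m̃ ∈ (-1,1) there exist constants c_{m̃}, C_{m̃} > 0 such that |f'(s)| ≤ c_{m̃} · f'(s)·(s - m̃) + C_{m̃} for all s ∈ (-1,1). -/
open Set Filter

theorem stmt_1 (f : ℝ → ℝ) (hf : ContDiffOn ℝ 1 f (Ioo (-1) 1))
    (htop : Tendsto (deriv f) (nhdsWithin 1 (Iio 1)) atTop)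
    (hbot : Tendsto (deriv f) (nhdsWithin (-1) (Ioi (-1))) atBot) :
    ∀ m ∈ Ioo (-1 : ℝ) 1, ∃ c > (0:ℝ), ∃ C > (0:ℝ), ∀ s ∈ Ioo (-1 : ℝ) 1,
      |deriv f s| ≤ c * (deriv f s * (s - m)) + C := by
  intro m hm
  obtain ⟨hm1, hm2⟩ := hm
  have h1 : {s | 0 ≤ deriv f s} ∈ nhdsWithin (1:ℝ) (Iio 1) :=
    htop.eventually (eventually_ge_atTop 0)
  rw [mem_nhdsLT_iff_exists_Ioo_subset] at h1
  obtain ⟨l, hl, hlsub⟩ := h1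
  have h2 : {s | deriv f s ≤ 0} ∈ nhdsWithin (-1:ℝ) (Ioi (-1)) :=
    hbot.eventually (eventually_le_atBot 0)
  rw [mem_nhdsGT_iff_exists_Ioo_subset] at h2
  obtain ⟨u, hu, husub⟩ := h2
  set b₀ : ℝ := max l ((m+1)/2) with hb₀def
  set a₀ : ℝ := min u ((m-1)/2) with ha₀def
  have hb₀ : b₀ < 1 := max_lt hl (by linarith)
  have ha₀ : -1 < a₀ := lt_min hu (by linarith)
  have hab : a₀ ≤ b₀ :=
    le_trans (min_le_right _ _) (le_trans (by linarith) (le_max_right _ _))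
  have hderivCont : ContinuousOn (deriv f) (Ioo (-1:ℝ) 1) :=
    hf.continuousOn_deriv_of_isOpen isOpen_Ioo le_rfl
  have hIcc : Icc a₀ b₀ ⊆ Ioo (-1:ℝ) 1 := fun x hx =>
    ⟨lt_of_lt_of_le ha₀ hx.1, lt_of_le_of_lt hx.2 hb₀⟩
  obtain ⟨M, hM⟩ := isCompact_Icc.exists_bound_of_continuousOn (hderivCont.mono hIcc)
  set M' : ℝ := max M 0 with hM'def
  have hM'0 : 0 ≤ M' := le_max_right _ _
  have hMb : ∀ x ∈ Icc a₀ b₀, |deriv f x| ≤ M' := fun x hx =>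
    le_trans (le_of_eq (Real.norm_eq_abs _).symm |>.trans (hM x hx)) (le_max_left _ _)
  set c : ℝ := 4 / (1 - m^2) with hcdef
  have hmsq : (0:ℝ) < 1 - m^2 := by nlinarith
  have hc : 0 < c := by positivity
  have hc4 : c * (1 - m^2) = 4 := by rw [hcdef]; field_simp
  refine ⟨c, hc, M' + 2*c*M' + 1, by positivity, ?_⟩
  intro s hs
  obtain ⟨hs1, hs2⟩ := hs
  rcases lt_or_ge b₀ s with hsb | hsb
  · -- right tail
    have hd : 0 ≤ deriv f s := hlsub ⟨lt_of_le_of_lt (le_max_left l _) hsb, hs2⟩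
    have hsm : (1-m)/2 ≤ s - m := by
      have : (m+1)/2 ≤ b₀ := le_max_right _ _
      linarith
    have hkey : 1 ≤ c * (s - m) := by nlinarith
    rw [abs_of_nonneg hd]
    nlinarith [mul_nonneg hd (by linarith : (0:ℝ) ≤ s - m)]
  · rcases lt_or_ge s a₀ with hsa | hsa
    · -- left tail
      have hd : deriv f s ≤ 0 := husub ⟨hs1, lt_of_lt_of_le hsa (min_le_left u _)⟩
      have hsm : (1+m)/2 ≤ m - s := by
        have : a₀ ≤ (m-1)/2 := min_le_right _ _
        linarith
      have hkey : 1 ≤ c * (m - s) := by nlinarith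
      rw [abs_of_nonpos hd]
      nlinarith
    · -- middle
      have hsmem : s ∈ Icc a₀ b₀ := ⟨hsa, hsb⟩
      have hb : |deriv f s| ≤ M' := hMb s hsmem
      have habs : |deriv f s * (s - m)| ≤ M' * 2 := by
        rw [abs_mul]
        apply mul_le_mul hb _ (abs_nonneg _) hM'0
        rw [abs_le]; constructor <;> linarith
      have := abs_le.mp habs
      have := abs_le.mp hb
      nlinarith
end

section
/- Let Ω ⊆ ℝ^d be measurable with finite measure and let f₀' : (-1,1) → ℝ be continuous. Suppose c, ξ ∈ L²(Ω) (identifying functions on Ω×(0,T) with functions on a measure space) satisfy: (ξ(x) - f₀'(s))(c(x) - s) ≥ 0 for almost every x and every s ∈ (-1,1), and lim_{s→±1} f₀'(s) = ±∞. Then c(x) ∈ (-1,1) almost everywhere and ξ(x) = f₀'(c(x)) almost everywhere. -/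
open Set MeasureTheory Filter

lemma stmt_13_key (f' : ℝ → ℝ) (hf'c : ContinuousOn f' (Ioo (-1) 1))
    (htop : Tendsto f' (nhdsWithin 1 (Iio 1)) atTop)
    (hbot : Tendsto f' (nhdsWithin (-1) (Ioi (-1))) atBot)
    (a b : ℝ) (h : ∀ s ∈ Ioo (-1:ℝ) 1, 0 ≤ (b - f' s) * (a - s)) :
    a ∈ Ioo (-1:ℝ) 1 ∧ b = f' a := by
  have ha1 : a < 1 := by
    by_contra hle
    push_neg at hle
    have h1 : ∀ᶠ s in nhdsWithin 1 (Iio 1), b < f' s :=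
      htop.eventually (eventually_gt_atTop b)
    have h2 : ∀ᶠ s in nhdsWithin 1 (Iio 1), s ∈ Ioo (-1:ℝ) 1 := by
      filter_upwards [self_mem_nhdsWithin,
        eventually_nhdsWithin_of_eventually_nhds
          (eventually_gt_nhds (by norm_num : (-1:ℝ) < 1))] with s hs hs'
      exact ⟨hs', hs⟩
    obtain ⟨s, hbs, hs⟩ := (h1.and h2).exists
    have := h s hs
    nlinarith [hs.2]
  have ha2 : -1 < a := by
    by_contra hle
    push_neg at hle
    have h1 : ∀ᶠ s in nhdsWithin (-1) (Ioi (-1)), f' s < b :=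
      hbot.eventually (eventually_lt_atBot b)
    have h2 : ∀ᶠ s in nhdsWithin (-1:ℝ) (Ioi (-1)), s ∈ Ioo (-1:ℝ) 1 := by
      filter_upwards [self_mem_nhdsWithin,
        eventually_nhdsWithin_of_eventually_nhds
          (eventually_lt_nhds (by norm_num : (-1:ℝ) < 1))] with s hs hs'
      exact ⟨hs, hs'⟩
    obtain ⟨s, hbs, hs⟩ := (h1.and h2).exists
    have := h s hs
    nlinarith [hs.1]
  have haI : a ∈ Ioo (-1:ℝ) 1 := ⟨ha2, ha1⟩
  refine ⟨haI, ?_⟩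
  have hmem : Ioo (-1:ℝ) 1 ∈ nhds a := Ioo_mem_nhds ha2 ha1
  have hconta : Tendsto f' (nhds a ⊓ Filter.principal (Ioo (-1:ℝ) 1)) (nhds (f' a)) :=
    hf'c a haI
  have hright : Tendsto f' (nhdsWithin a (Ioi a)) (nhds (f' a)) :=
    hconta.mono_left (nhdsWithin_le_of_mem (mem_nhdsWithin_of_mem_nhds hmem))
  have hleft : Tendsto f' (nhdsWithin a (Iio a)) (nhds (f' a)) :=
    hconta.mono_left (nhdsWithin_le_of_mem (mem_nhdsWithin_of_mem_nhds hmem))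
  have hub : b ≤ f' a := by
    refine ge_of_tendsto hright ?_
    filter_upwards [self_mem_nhdsWithin,
      eventually_nhdsWithin_of_eventually_nhds (eventually_mem_nhds_iff.mpr hmem)] with s hs hs'
    have hsI : s ∈ Ioo (-1:ℝ) 1 := mem_of_mem_nhds hs'
    have := h s hsI
    nlinarith [mem_Ioi.mp hs]
  have hlb : f' a ≤ b := by
    refine le_of_tendsto hleft ?_
    filter_upwards [self_mem_nhdsWithin,
      eventually_nhdsWithin_of_eventually_nhds (eventually_mem_nhds_iff.mpr hmem)] with s hs hs'
    have hsI : s ∈ Ioo (-1:ℝ) 1 := mem_of_mem_nhds hs'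
    have := h s hsI
    nlinarith [mem_Iio.mp hs]
  linarith

theorem stmt_13 {Ω : Type*} [MeasurableSpace Ω] (μ : Measure Ω) [IsFiniteMeasure μ]
    (f' : ℝ → ℝ) (hf'c : ContinuousOn f' (Ioo (-1) 1)) (hf'm : MonotoneOn f' (Ioo (-1) 1))
    (htop : Tendsto f' (nhdsWithin 1 (Iio 1)) atTop)
    (hbot : Tendsto f' (nhdsWithin (-1) (Ioi (-1))) atBot)
    (c ξ : Ω → ℝ) (hcm : Measurable c) (hξm : Measurable ξ)
    (hc : MemLp c 2 μ) (hξ : MemLp ξ 2 μ)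
    (h : ∀ᵐ x ∂μ, ∀ s ∈ Ioo (-1:ℝ) 1, 0 ≤ (ξ x - f' s) * (c x - s)) :
    (∀ᵐ x ∂μ, c x ∈ Ioo (-1:ℝ) 1) ∧ (∀ᵐ x ∂μ, ξ x = f' (c x)) := by
  constructor
  · filter_upwards [h] with x hx
    exact (stmt_13_key f' hf'c htop hbot (c x) (ξ x) hx).1
  · filter_upwards [h] with x hx
    exact (stmt_13_key f' hf'c htop hbot (c x) (ξ x) hx).2
end
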